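/- Let Z be a standard Gaussian random variable (law N(0,1)), and let F > 0, K > 0, σ > 0. Then E[(K − F e^{σZ − σ²/2})₊] = K·Φ(−d₋) − F·Φ(−d₊), where d± = (log(F/K))/σ ± σ/2 and x₊ = max(x,0). This lognormal expectation is the key computation yielding the zero-coupon bond put option price Put_ZC(t,T,S,K) = K P(t,T)Φ(d₂(t,T)) − P(t,S)Φ(d₁(t,T)) in Proposition 2.3, with F = P(t,S)/P(t,T) and σ = v(t,T,S)√(T−t). -/

import Mathlib

/-!
The put payoff `(K - F e^{σz - σ²/2})₊` is positive exactly on `{z ≤ -d₋}`. There, the standard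
Gaussian density `φ` times `e^{σz - σ²/2}` is the density `φ(· - σ)` of `N(σ, 1)` (exponential
tilting), so the expectation is `K Φ(-d₋) - F Φ(-d₋ - σ)`, and `-d₋ - σ = -d₊`.
-/

open MeasureTheory ProbabilityTheory

noncomputable def stdNormalCDF (x : ℝ) : ℝ :=
  ∫ z in Set.Iic x, Real.exp (-z ^ 2 / 2) / Real.sqrt (2 * Real.pi)

open Real
open scoped NNReal

lemma stdNormalCDF_eq_setIntegral_gaussianPDFReal (x : ℝ) :
    stdNormalCDF x = ∫ z in Set.Iic x, gaussianPDFReal 0 1 z := by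
  refine setIntegral_congr_fun measurableSet_Iic fun z _ => ?_
  simp [gaussianPDFReal, div_eq_inv_mul]

lemma setIntegral_Iic_gaussianPDFReal (μ c : ℝ) :
    ∫ z in Set.Iic c, gaussianPDFReal μ 1 z = stdNormalCDF (c - μ) := by
  have hpre : (· + μ) ⁻¹' Set.Iic c = Set.Iic (c - μ) := by
    ext x
    simp [le_sub_iff_add_le]
  calc ∫ z in Set.Iic c, gaussianPDFReal μ 1 z
      = ∫ z in (· + μ) ⁻¹' Set.Iic c, gaussianPDFReal μ 1 (z + μ) :=
        ((measurePreserving_add_right volume μ).setIntegral_preimage_emb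
          (measurableEmbedding_addRight μ) _ _).symm
    _ = stdNormalCDF (c - μ) := by
        simp [hpre, gaussianPDFReal_add, stdNormalCDF_eq_setIntegral_gaussianPDFReal]

lemma gaussianPDFReal_mul_exp (μ : ℝ) (v : ℝ≥0) (s x : ℝ) :
    gaussianPDFReal μ v x * exp (s * (x - μ) - s ^ 2 * v / 2)
      = gaussianPDFReal (μ + s * v) v x := by
  rcases eq_or_ne v 0 with rfl | hv
  · simp
  have hv' : (v : ℝ) ≠ 0 := by exact_mod_cast hv
  rw [gaussianPDFReal, gaussianPDFReal, mul_assoc, ← exp_add]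
  congr 2
  field_simp
  ring

lemma sub_mul_exp_nonneg_iff {F K σ : ℝ} (hF : 0 < F) (hK : 0 < K) (hσ : 0 < σ) (z : ℝ) :
    0 ≤ K - F * exp (σ * z - σ ^ 2 / 2) ↔ z ≤ σ / 2 - log (F / K) / σ := by
  have hlog : log (K / F) = -log (F / K) := by rw [← log_inv, inv_div]
  have hthreshold : σ * (σ / 2 - log (F / K) / σ) = σ ^ 2 / 2 - log (F / K) := by
    field_simp
  rw [sub_nonneg, ← le_div_iff₀' hF, ← le_log_iff_exp_le (div_pos hK hF), hlog,
    iff_comm, ← mul_le_mul_iff_right₀ hσ, hthreshold]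
  constructor <;> intro h <;> linarith

lemma gaussianPDFReal_smul_put_payoff {F K σ : ℝ} (hF : 0 < F) (hK : 0 < K) (hσ : 0 < σ)
    (z : ℝ) :
    gaussianPDFReal 0 1 z • max (K - F * exp (σ * z - σ ^ 2 / 2)) 0
      = (Set.Iic (σ / 2 - log (F / K) / σ)).indicator
          (fun z => K * gaussianPDFReal 0 1 z - F * gaussianPDFReal σ 1 z) z := by
  have htilt := gaussianPDFReal_mul_exp 0 1 σ z
  simp only [sub_zero, NNReal.coe_one, mul_one, zero_add] at htilt
  by_cases hz : z ≤ σ / 2 - log (F / K) / σ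
  · rw [Set.indicator_of_mem (Set.mem_Iic.mpr hz),
      max_eq_left ((sub_mul_exp_nonneg_iff hF hK hσ z).mpr hz), smul_eq_mul, ← htilt]
    ring
  · have hneg : K - F * exp (σ * z - σ ^ 2 / 2) ≤ 0 :=
      (not_le.mp (mt (sub_mul_exp_nonneg_iff hF hK hσ z).mp hz)).le
    rw [Set.indicator_of_notMem (mt Set.mem_Iic.mp hz), max_eq_right hneg, smul_zero]

/-- The lognormal (Black) put expectation: for a standard Gaussian `Z` and `F, K, σ > 0`,
`E[(K − F e^{σZ − σ²/2})₊] = K Φ(−d₋) − F Φ(−d₊)` with `d± = log(F/K)/σ ± σ/2`. -/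
theorem lognormal_put_expectation (F K σ : ℝ) (hF : 0 < F) (hK : 0 < K) (hσ : 0 < σ) :
    (∫ z, max (K - F * Real.exp (σ * z - σ ^ 2 / 2)) 0 ∂(gaussianReal 0 1))
      = K * stdNormalCDF (-(Real.log (F / K) / σ - σ / 2))
        - F * stdNormalCDF (-(Real.log (F / K) / σ + σ / 2)) := by
  rw [integral_gaussianReal_eq_integral_smul one_ne_zero]
  simp_rw [gaussianPDFReal_smul_put_payoff hF hK hσ]
  rw [integral_indicator measurableSet_Iic,
    integral_sub ((integrable_gaussianPDFReal 0 1).const_mul K).restrict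
      ((integrable_gaussianPDFReal σ 1).const_mul F).restrict,
    integral_const_mul, integral_const_mul, setIntegral_Iic_gaussianPDFReal,
    setIntegral_Iic_gaussianPDFReal]
  ring_nf
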